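/- arXiv:2211.07151 — 2 statements merged into one kernel-verified Lean document; each statement's English description precedes it below -/
import Mathlib

section
/- Let a < b and let f : [a, b] → ℝ be continuous and strictly increasing. For each n ≥ 1 define, with x_i^{(n)} = a + i(b−a)/n, y_i^{(n)} = f(x_i^{(n)}), c = f(a), d = f(b), hat functions A_i^{(n)} and B_i^{(n)}, R_n(x, y) = max_{0≤i≤n} A_i^{(n)}(x)·B_i^{(n)}(y), and E_n(x) = (∫_c^d y·R_n(x, y) dy)/(∫_c^d R_n(x, y) dy). Then the sequence (E_n) converges uniformly to f on [a, b]: for every ε > 0 there exists N such that for all n > N and all x ∈ [a, b], |E_n(x) − f(x)| < ε. -/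
open scoped Classical

/-- The equidistant node `x_i^{(n)} = a + i (b-a)/n` of `[a, b]`. -/
noncomputable def nodes (a b : ℝ) (n i : ℕ) : ℝ := a + (i : ℝ) * (b - a) / (n : ℝ)

/-- The triangular hat function `A_i^{(n)}(x) = max (0, 1 - (n/(b-a)) |x - x_i^{(n)}|)`. -/
noncomputable def hatA (a b : ℝ) (n i : ℕ) (x : ℝ) : ℝ :=
  max 0 (1 - ((n : ℝ) / (b - a)) * |x - nodes a b n i|)

/-- The hat function `B_i^{(n)}` at the strictly increasing nodes `y 0 < y 1 < … < y n`:
it rises linearly from `y (i-1)` to `y i`, falls linearly from `y i` to `y (i+1)`, and is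
`0` otherwise; for `i = 0` only the falling piece is present and for `i = n` only the
rising piece is present. -/
noncomputable def hatB (n : ℕ) (y : ℕ → ℝ) (i : ℕ) (t : ℝ) : ℝ :=
  if i ≠ 0 ∧ y (i - 1) ≤ t ∧ t ≤ y i then (t - y (i - 1)) / (y i - y (i - 1))
  else if i ≠ n ∧ y i ≤ t ∧ t ≤ y (i + 1) then (y (i + 1) - t) / (y (i + 1) - y i)
  else 0

/-- The joint membership function `R_n(x, t) = max_{0 ≤ i ≤ n} A_i^{(n)}(x) B_i^{(n)}(t)`. -/
noncomputable def Rfun (a b : ℝ) (n : ℕ) (y : ℕ → ℝ) (x t : ℝ) : ℝ :=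
  (Finset.range (n + 1)).sup' Finset.nonempty_range_add_one
    (fun i => hatA a b n i x * hatB n y i t)

/-!
On `[a, b]` at most two hats `A_i` whose nodes lie within one mesh width `h = (b - a)/n` of
`x` are nonzero at `x`, so `R_n(x, ·)` vanishes outside `[f(x_{i-1}), f(x_{i+1})]` for such an
`i`, an interval that also contains `f x` and has length at most the oscillation of `f` over
`2h`. Since `E_n(x)` is a weighted mean of `t` with weight `R_n(x, t) ≥ 0` (of positive total
mass), `|E_n(x) - f x|` is bounded by that oscillation, which tends to `0` uniformly in `x`
because `f` is uniformly continuous on `[a, b]`.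
-/

open Set MeasureTheory

section Nodes

variable {a b : ℝ} {n : ℕ}

lemma nodes_zero (a b : ℝ) (n : ℕ) : nodes a b n 0 = a := by simp [nodes]

lemma nodes_self (a b : ℝ) (hn : 0 < n) : nodes a b n n = b := by
  rw [nodes, mul_div_cancel_left₀ _ (Nat.cast_pos.mpr hn).ne']; ring

lemma nodes_sub_nodes (a b : ℝ) (n i j : ℕ) :
    nodes a b n j - nodes a b n i = ((j : ℝ) - i) * ((b - a) / n) := by
  unfold nodes; ring

lemma strictMono_nodes (hab : a < b) (hn : 0 < n) : StrictMono (nodes a b n) := by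
  intro i j hij
  rw [← sub_pos, nodes_sub_nodes]
  exact mul_pos (sub_pos.mpr (Nat.cast_lt.mpr hij))
    (div_pos (sub_pos.mpr hab) (Nat.cast_pos.mpr hn))

lemma nodes_mem_Icc (hab : a < b) (hn : 0 < n) {i : ℕ} (hi : i ≤ n) :
    nodes a b n i ∈ Icc a b := by
  have hmono := (strictMono_nodes hab hn).monotone
  constructor
  · simpa only [nodes_zero] using hmono (Nat.zero_le i)
  · simpa only [nodes_self a b hn] using hmono hi

lemma mapsTo_nodes_Icc (hab : a < b) (hn : 0 < n) : MapsTo (nodes a b n) (Iic n) (Icc a b) :=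
  fun _ hi => nodes_mem_Icc hab hn hi

lemma exists_abs_sub_nodes_lt (hab : a < b) (hn : 0 < n) {x : ℝ} (hx : x ∈ Icc a b) :
    ∃ i ≤ n, |x - nodes a b n i| < (b - a) / n := by
  have hba : 0 < b - a := sub_pos.mpr hab
  have hn' : (0 : ℝ) < n := Nat.cast_pos.mpr hn
  set s := (x - a) / ((b - a) / n) with hs
  have hs0 : 0 ≤ s := div_nonneg (sub_nonneg.mpr hx.1) (by positivity)
  have hsn : s ≤ n := by
    rw [hs, div_le_iff₀ (by positivity), mul_div_cancel₀ _ hn'.ne']; linarith [hx.2]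
  refine ⟨⌈s⌉₊, Nat.ceil_le.mpr hsn, ?_⟩
  have hh : 0 < (b - a) / n := div_pos hba hn'
  have hsub : x - nodes a b n ⌈s⌉₊ = (s - ⌈s⌉₊) * ((b - a) / n) := by
    rw [hs, nodes]; field_simp; ring
  have hceil : |s - ⌈s⌉₊| < 1 :=
    abs_sub_lt_iff.mpr ⟨by linarith [Nat.le_ceil s], by linarith [Nat.ceil_lt_add_one hs0]⟩
  rw [hsub, abs_mul, abs_of_pos hh]
  exact mul_lt_of_lt_one_left hh hceil

/-- At the end nodes the window is clipped to `[a, b]`: `0 - 1 = 0` in `ℕ`, and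
`min (n + 1) n = n`. -/
lemma mem_Icc_nodes_of_abs_sub_lt (hn : 0 < n) {x : ℝ} (hx : x ∈ Icc a b)
    {i : ℕ} (hi : i ≤ n) (hxi : |x - nodes a b n i| < (b - a) / n) :
    x ∈ Icc (nodes a b n (i - 1)) (nodes a b n (min (i + 1) n)) := by
  obtain ⟨hlo, hhi⟩ := abs_sub_lt_iff.mp hxi
  constructor
  · rcases Nat.eq_zero_or_pos i with rfl | hi0
    · simpa only [Nat.zero_sub, nodes_zero] using hx.1
    · have := nodes_sub_nodes a b n (i - 1) i
      rw [Nat.cast_sub hi0, Nat.cast_one] at this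
      linarith
  · rcases hi.lt_or_eq with hin | rfl
    · have := nodes_sub_nodes a b n i (i + 1)
      rw [min_eq_left hin, ← sub_nonneg]
      push_cast at this
      linarith
    · simpa only [min_eq_right (Nat.le_succ i), nodes_self a b hn] using hx.2

lemma nodes_min_succ_sub_nodes_pred_le (hab : a ≤ b) (i : ℕ) :
    nodes a b n (min (i + 1) n) - nodes a b n (i - 1) ≤ 2 * ((b - a) / n) := by
  rw [nodes_sub_nodes]
  have : ((min (i + 1) n : ℕ) : ℝ) ≤ ((i - 1 : ℕ) : ℝ) + 2 := by
    exact_mod_cast (by omega : min (i + 1) n ≤ i - 1 + 2)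
  gcongr
  linarith

end Nodes

section Hats

variable {a b : ℝ} {n : ℕ}

lemma hatA_nonneg (a b : ℝ) (n i : ℕ) (x : ℝ) : 0 ≤ hatA a b n i x := le_max_left _ _

lemma hatA_le_one (hab : a ≤ b) (i : ℕ) (x : ℝ) : hatA a b n i x ≤ 1 :=
  max_le zero_le_one
    (sub_le_self _ (mul_nonneg (div_nonneg n.cast_nonneg (sub_nonneg.mpr hab)) (abs_nonneg _)))

lemma hatA_pos_iff (hab : a < b) (hn : 0 < n) {i : ℕ} {x : ℝ} :
    0 < hatA a b n i x ↔ |x - nodes a b n i| < (b - a) / n := by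
  have hba : 0 < b - a := sub_pos.mpr hab
  have hn' : (0 : ℝ) < n := Nat.cast_pos.mpr hn
  rw [hatA, lt_max_iff, sub_pos, lt_div_iff₀ hn', div_mul_eq_mul_div, div_lt_one hba, mul_comm]
  simp

variable {y : ℕ → ℝ}

lemma hatB_nonneg (n : ℕ) (y : ℕ → ℝ) (i : ℕ) (t : ℝ) : 0 ≤ hatB n y i t := by
  unfold hatB
  split_ifs with h₁ h₂
  · exact div_nonneg (by linarith [h₁.2.1]) (by linarith [h₁.2.1, h₁.2.2])
  · exact div_nonneg (by linarith [h₂.2.2]) (by linarith [h₂.2.1, h₂.2.2])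
  · exact le_rfl

lemma hatB_le_one (n : ℕ) (y : ℕ → ℝ) (i : ℕ) (t : ℝ) : hatB n y i t ≤ 1 := by
  unfold hatB
  split_ifs with h₁ h₂
  · exact div_le_one_of_le₀ (by linarith [h₁.2.2]) (by linarith [h₁.2.1, h₁.2.2])
  · exact div_le_one_of_le₀ (by linarith [h₂.2.1]) (by linarith [h₂.2.1, h₂.2.2])
  · exact zero_le_one

lemma measurable_hatB (n : ℕ) (y : ℕ → ℝ) (i : ℕ) : Measurable (hatB n y i) := by
  unfold hatB
  refine Measurable.ite ?_ (by fun_prop) (Measurable.ite ?_ (by fun_prop) measurable_const) <;>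
    exact (MeasurableSet.const _).inter (measurableSet_Ici.inter measurableSet_Iic)

lemma mem_Icc_of_hatB_ne_zero (hy : MonotoneOn y (Iic n)) {i : ℕ} (hi : i ≤ n) {t : ℝ}
    (h : hatB n y i t ≠ 0) : t ∈ Icc (y (i - 1)) (y (min (i + 1) n)) := by
  have hy' : ∀ {j k : ℕ}, j ≤ k → k ≤ n → y j ≤ y k := fun hjk hk =>
    hy (mem_Iic.mpr (hjk.trans hk)) (mem_Iic.mpr hk) hjk
  unfold hatB at h
  split_ifs at h with h₁ h₂
  · exact ⟨h₁.2.1, h₁.2.2.trans (hy' (le_min (Nat.le_succ i) hi) (min_le_right _ _))⟩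
  · rw [min_eq_left (Nat.succ_le_of_lt (hi.lt_of_ne h₂.1))]
    exact ⟨(hy' (Nat.sub_le i 1) hi).trans h₂.2.1, h₂.2.2⟩
  · exact absurd rfl h

lemma exists_Icc_half_le_hatB (hy : StrictMonoOn y (Iic n)) (hn : 0 < n) {i : ℕ} (hi : i ≤ n) :
    ∃ u v, y 0 ≤ u ∧ u < v ∧ v ≤ y n ∧ ∀ t ∈ Icc u v, 1 / 2 ≤ hatB n y i t := by
  have hy' : ∀ {j k : ℕ}, j ≤ k → k ≤ n → y j ≤ y k := fun hjk hk =>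
    hy.monotoneOn (mem_Iic.mpr (hjk.trans hk)) (mem_Iic.mpr hk) hjk
  rcases Nat.eq_zero_or_pos i with rfl | hi0
  · have h01 : y 0 < y 1 := hy (mem_Iic.mpr (Nat.zero_le n)) (mem_Iic.mpr hn) zero_lt_one
    refine ⟨y 0, (y 0 + y 1) / 2, le_rfl, by linarith, by linarith [hy' hn le_rfl], ?_⟩
    rintro t ⟨ht₀, ht₁⟩
    rw [hatB, if_neg (by simp), if_pos ⟨hn.ne, ht₀, by linarith⟩, le_div_iff₀ (by linarith)]
    linarith
  · have hlt : y (i - 1) < y i :=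
      hy (mem_Iic.mpr (by omega)) (mem_Iic.mpr hi) (Nat.sub_one_lt hi0.ne')
    refine ⟨(y (i - 1) + y i) / 2, y i, by linarith [hy' (Nat.zero_le (i - 1)) (by omega)],
      by linarith, hy' hi le_rfl, ?_⟩
    rintro t ⟨ht₀, ht₁⟩
    rw [hatB, if_pos ⟨hi0.ne', by linarith, ht₁⟩, le_div_iff₀ (by linarith)]
    linarith

end Hats

section Membership

variable {a b : ℝ} {n : ℕ} {y : ℕ → ℝ} {x : ℝ}

lemma hatA_mul_hatB_le_Rfun {i : ℕ} (hi : i ≤ n) (t : ℝ) :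
    hatA a b n i x * hatB n y i t ≤ Rfun a b n y x t :=
  Finset.le_sup' (fun i => hatA a b n i x * hatB n y i t)
    (Finset.mem_range.mpr (Nat.lt_succ_of_le hi))

lemma Rfun_nonneg (t : ℝ) : 0 ≤ Rfun a b n y x t :=
  (mul_nonneg (hatA_nonneg a b n 0 x) (hatB_nonneg n y 0 t)).trans
    (hatA_mul_hatB_le_Rfun (Nat.zero_le n) t)

lemma Rfun_le_one (hab : a ≤ b) (t : ℝ) : Rfun a b n y x t ≤ 1 :=
  Finset.sup'_le _ _ fun i _ =>
    mul_le_one₀ (hatA_le_one hab i x) (hatB_nonneg n y i t) (hatB_le_one n y i t)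

lemma measurable_Rfun : Measurable (Rfun a b n y x) := by
  have : Rfun a b n y x = (Finset.range (n + 1)).sup' Finset.nonempty_range_add_one
      (fun i t => hatA a b n i x * hatB n y i t) := by
    ext t; rw [Finset.sup'_apply]; rfl
  rw [this]
  exact Finset.measurable_range_sup' fun i _ => (measurable_hatB n y i).const_mul _

lemma intervalIntegrable_Rfun (hab : a ≤ b) (c d : ℝ) :
    IntervalIntegrable (Rfun a b n y x) volume c d := by
  refine (intervalIntegrable_const (c := (1 : ℝ))).mono_fun
    measurable_Rfun.aestronglyMeasurable (ae_of_all _ fun t => ?_)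
  simp only [Real.norm_eq_abs, abs_one, abs_of_nonneg (Rfun_nonneg t), Rfun_le_one hab t]

lemma exists_of_Rfun_ne_zero (hab : a < b) (hn : 0 < n) (hy : MonotoneOn y (Iic n)) {t : ℝ}
    (h : Rfun a b n y x t ≠ 0) :
    ∃ i ≤ n, |x - nodes a b n i| < (b - a) / n ∧ t ∈ Icc (y (i - 1)) (y (min (i + 1) n)) := by
  obtain ⟨i, hi, hRi⟩ := Finset.exists_mem_eq_sup' Finset.nonempty_range_add_one
    (fun i => hatA a b n i x * hatB n y i t)
  have hin : i ≤ n := Nat.lt_succ_iff.mp (Finset.mem_range.mp hi)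
  rw [Rfun, hRi] at h
  refine ⟨i, hin, (hatA_pos_iff hab hn).mp ?_,
    mem_Icc_of_hatB_ne_zero hy hin (right_ne_zero_of_mul h)⟩
  exact (hatA_nonneg a b n i x).lt_of_ne' (left_ne_zero_of_mul h)

lemma integral_Rfun_pos (hab : a < b) (hn : 0 < n) (hy : StrictMonoOn y (Iic n))
    (hx : x ∈ Icc a b) : 0 < ∫ t in y 0..y n, Rfun a b n y x t := by
  obtain ⟨i, hi, hxi⟩ := exists_abs_sub_nodes_lt hab hn hx
  have hA : 0 < hatA a b n i x := (hatA_pos_iff hab hn).mpr hxi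
  obtain ⟨u, v, hu, huv, hv, hB⟩ := exists_Icc_half_le_hatB hy hn hi
  have hR : ∀ t ∈ Icc u v, hatA a b n i x / 2 ≤ Rfun a b n y x t := fun t ht =>
    calc hatA a b n i x / 2 ≤ hatA a b n i x * hatB n y i t := by
          linarith [mul_le_mul_of_nonneg_left (hB t ht) hA.le]
      _ ≤ Rfun a b n y x t := hatA_mul_hatB_le_Rfun hi t
  calc 0 < (v - u) * (hatA a b n i x / 2) := by nlinarith
    _ ≤ ∫ t in u..v, Rfun a b n y x t := by
        simpa [mul_div_assoc] using intervalIntegral.integral_mono_on huv.le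
          intervalIntegrable_const (intervalIntegrable_Rfun hab.le u v) hR
    _ ≤ ∫ t in y 0..y n, Rfun a b n y x t :=
        intervalIntegral.integral_mono_interval hu huv.le hv (ae_of_all _ Rfun_nonneg)
          (intervalIntegrable_Rfun hab.le _ _)

end Membership

lemma abs_centroid_sub_le {g : ℝ → ℝ} {c d m η : ℝ} (hcd : c ≤ d)
    (hg : IntervalIntegrable g volume c d) (hg₀ : ∀ t, 0 ≤ g t)
    (hpos : 0 < ∫ t in c..d, g t) (hconc : ∀ t, g t ≠ 0 → |t - m| ≤ η) :
    |(∫ t in c..d, t * g t) / (∫ t in c..d, g t) - m| ≤ η := by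
  have htg : IntervalIntegrable (fun t => t * g t) volume c d :=
    hg.continuousOn_mul continuousOn_id
  have hsplit : ∫ t in c..d, (t - m) * g t = (∫ t in c..d, t * g t) - m * ∫ t in c..d, g t := by
    simp only [sub_mul]
    rw [intervalIntegral.integral_sub htg (hg.const_mul m), intervalIntegral.integral_const_mul]
  have hbound : |∫ t in c..d, (t - m) * g t| ≤ η * ∫ t in c..d, g t := by
    rw [← Real.norm_eq_abs, ← intervalIntegral.integral_const_mul η g]
    refine intervalIntegral.norm_integral_le_of_norm_le hcd (ae_of_all _ fun t _ => ?_)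
      (hg.const_mul η)
    rw [Real.norm_eq_abs, abs_mul, abs_of_nonneg (hg₀ t)]
    rcases eq_or_ne (g t) 0 with h | h
    · simp [h]
    · exact mul_le_mul_of_nonneg_right (hconc t h) (hg₀ t)
  have hcentroid : (∫ t in c..d, t * g t) / (∫ t in c..d, g t) - m =
      (∫ t in c..d, (t - m) * g t) / ∫ t in c..d, g t := by
    rw [hsplit]; field_simp
  rwa [hcentroid, abs_div, abs_of_pos hpos, div_le_iff₀ hpos]

lemma abs_sub_le_of_Rfun_ne_zero {a b η x t : ℝ} {n : ℕ} {f : ℝ → ℝ} (hab : a < b) (hn : 0 < n)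
    (hf : MonotoneOn f (Icc a b))
    (hη : ∀ p ∈ Icc a b, ∀ q ∈ Icc a b, p ≤ q → q - p ≤ 2 * ((b - a) / n) → f q - f p ≤ η)
    (hx : x ∈ Icc a b) (ht : Rfun a b n (fun i => f (nodes a b n i)) x t ≠ 0) :
    |t - f x| ≤ η := by
  obtain ⟨i, hi, hxi, htB⟩ := exists_of_Rfun_ne_zero hab hn
    (hf.comp ((strictMono_nodes hab hn).monotone.monotoneOn _) (mapsTo_nodes_Icc hab hn)) ht
  have hp := nodes_mem_Icc hab hn (i.sub_le 1 |>.trans hi)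
  have hq := nodes_mem_Icc hab hn (min_le_right (i + 1) n)
  have hxpq := mem_Icc_nodes_of_abs_sub_lt hn hx hi hxi
  calc |t - f x| ≤ f (nodes a b n (min (i + 1) n)) - f (nodes a b n (i - 1)) :=
        abs_sub_le_of_le_of_le htB.1 htB.2 (hf hp hx hxpq.1) (hf hx hq hxpq.2)
    _ ≤ η := hη _ hp _ hq (hxpq.1.trans hxpq.2) (nodes_min_succ_sub_nodes_pred_le hab.le i)

/-- Theorem 2.1 of the paper, strictly monotone case. For continuous
strictly increasing `f` on `[a, b]`, the conditional mathematical expectations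
`E_n(x) = (∫_c^d t R_n(x,t) dt)/(∫_c^d R_n(x,t) dt)` converge uniformly to `f` on `[a, b]`. -/
theorem stmt_5 (a b : ℝ) (hab : a < b) (f : ℝ → ℝ)
    (hf : ContinuousOn f (Set.Icc a b)) (hmono : StrictMonoOn f (Set.Icc a b)) :
    ∀ ε > 0, ∃ N : ℕ, ∀ n > N, ∀ x ∈ Set.Icc a b,
      |(∫ t in f a..f b, t * Rfun a b n (fun i => f (nodes a b n i)) x t) /
          (∫ t in f a..f b, Rfun a b n (fun i => f (nodes a b n i)) x t) - f x| < ε := by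
  intro ε hε
  obtain ⟨δ, hδ, hfδ⟩ := Metric.uniformContinuousOn_iff.mp
    (isCompact_Icc.uniformContinuousOn_of_continuous hf) (ε / 2) (half_pos hε)
  obtain ⟨N, hN⟩ := exists_nat_gt (2 * (b - a) / δ)
  refine ⟨N, fun n hnN x hx => ?_⟩
  have hn : 0 < n := by omega
  have hmesh : 2 * ((b - a) / n) < δ := by
    rw [← mul_div_assoc, div_lt_iff₀ (Nat.cast_pos.mpr hn), mul_comm δ]
    exact (div_lt_iff₀ hδ).mp (hN.trans (Nat.cast_lt.mpr hnN))
  have hy := hmono.comp ((strictMono_nodes hab hn).strictMonoOn _) (mapsTo_nodes_Icc hab hn)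
  have hfab : f a < f b := hmono ⟨le_rfl, hab.le⟩ ⟨hab.le, le_rfl⟩ hab
  have hpos := integral_Rfun_pos hab hn hy hx
  simp only [Function.comp_def, nodes_zero, nodes_self a b hn] at hpos
  have hconc : ∀ t, Rfun a b n (fun i => f (nodes a b n i)) x t ≠ 0 → |t - f x| ≤ ε / 2 := by
    refine fun t ht => abs_sub_le_of_Rfun_ne_zero hab hn hmono.monotoneOn
      (fun p hp q hq hpq hqp => ?_) hx ht
    have := hfδ q hq p hp (by rw [Real.dist_eq, abs_of_nonneg (sub_nonneg.mpr hpq)]; linarith)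
    exact (le_abs_self _).trans (Real.dist_eq _ _ ▸ this).le
  exact (abs_centroid_sub_le hfab.le (intervalIntegrable_Rfun hab.le _ _) Rfun_nonneg hpos
    hconc).trans_lt (half_lt_self hε)
end

section
/- Let f : [0, 1] → ℝ be continuous and strictly increasing, with c = f(0) and d = f(1), and fix n ≥ 1. With m = 2n, x_i = i/m, y_i = f(x_i), the functions A_i on [0, 1] and B_i on [c, d] built from sin²(nπx), cos²(nπx) and from the ground-state densities sin²(π(y − y_{i−1})/(2(y_i − y_{i−1}))), cos²(π(y − y_i)/(2(y_{i+1} − y_i))) as in the quantum construction, and μ_n(x, y) = max_{0≤i≤m} A_i(x)·B_i(y), one has ∫_c^d μ_n(x, y) dy > 0 for every x ∈ [0, 1]. -/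
open scoped Classical

/-- The base function `A_i` on `[0, 1]` built from the essence probability densities of the
Adam and Eve wave functions at quantum number `n` (with `m = 2n`): `A_i(x) = sin²(nπx)` for
odd `i` on `[(i−1)/m, (i+1)/m]`, `A_i(x) = cos²(nπx)` for even `i` on
`[max 0 ((i−1)/m), min 1 ((i+1)/m)]`, and `0` otherwise. -/
noncomputable def qA (n i : ℕ) (x : ℝ) : ℝ :=
  if i % 2 = 1 then
    if ((i : ℝ) - 1) / (2 * (n : ℝ)) ≤ x ∧ x ≤ ((i : ℝ) + 1) / (2 * (n : ℝ)) then
      Real.sin ((n : ℝ) * Real.pi * x) ^ 2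
    else 0
  else
    if max 0 (((i : ℝ) - 1) / (2 * (n : ℝ))) ≤ x ∧
        x ≤ min 1 (((i : ℝ) + 1) / (2 * (n : ℝ))) then
      Real.cos ((n : ℝ) * Real.pi * x) ^ 2
    else 0

/-- The base function `B_i` on `[c, d]` built from the ground-state probability essence
wave functions of the descendant particles over the subintervals `[y (i−1), y i]`
(with `m = 2n`): `B_0` is the falling `cos²` piece on `[y 0, y 1]`, `B_m` is the rising
`sin²` piece on `[y (m−1), y m]`, and for `1 ≤ i ≤ m−1`, `B_i` rises as `sin²` on
`[y (i−1), y i]` and falls as `cos²` on `(y i, y (i+1)]`, being `0` otherwise. -/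
noncomputable def qB (n : ℕ) (y : ℕ → ℝ) (i : ℕ) (t : ℝ) : ℝ :=
  if i = 0 then
    if y 0 ≤ t ∧ t ≤ y 1 then
      Real.cos (Real.pi * (t - y 0) / (2 * (y 1 - y 0))) ^ 2
    else 0
  else if i = 2 * n then
    if y (2 * n - 1) ≤ t ∧ t ≤ y (2 * n) then
      Real.sin (Real.pi * (t - y (2 * n - 1)) / (2 * (y (2 * n) - y (2 * n - 1)))) ^ 2
    else 0
  else
    if y (i - 1) ≤ t ∧ t ≤ y i then
      Real.sin (Real.pi * (t - y (i - 1)) / (2 * (y i - y (i - 1)))) ^ 2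
    else if y i < t ∧ t ≤ y (i + 1) then
      Real.cos (Real.pi * (t - y i) / (2 * (y (i + 1) - y i))) ^ 2
    else 0

/-- The joint function `μ_n(x, t) = max_{0 ≤ i ≤ 2n} A_i(x) B_i(t)`. -/
noncomputable def mufun (n : ℕ) (y : ℕ → ℝ) (x t : ℝ) : ℝ :=
  (Finset.range (2 * n + 1)).sup' Finset.nonempty_range_add_one
    (fun i => qA n i x * qB n y i t)

/-!
At every `x ∈ [0, 1]` two consecutive base functions `A_K`, `A_{K+1}` are `sin²(nπx)` and
`cos²(nπx)` in some order, so one of them is positive; call its index `i`. The factor `B_i` is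
a ground-state density, positive on the open interval between two consecutive nodes `y_j`, which
lies in `[c, d]` because `f` is increasing. Hence `μ_n(x, ·) ≥ A_i(x) B_i(·)` is positive on an
open subinterval of `[c, d]`, and its integral is positive since `μ_n ≥ 0`.
-/

open Set MeasureTheory

lemma intervalIntegral_pos_of_pos_on_Ioo_subset {g : ℝ → ℝ} {a b c d : ℝ}
    (hg : 0 ≤ᵐ[volume.restrict (Ioc c d)] g) (hgi : IntervalIntegrable g volume c d)
    (hca : c ≤ a) (hab : a < b) (hbd : b ≤ d) (hpos : ∀ t ∈ Ioo a b, 0 < g t) :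
    0 < ∫ t in c..d, g t := by
  have hsub : uIcc a b ⊆ uIcc c d :=
    uIcc_subset_uIcc (mem_uIcc_of_le hca (hab.le.trans hbd))
      (mem_uIcc_of_le (hca.trans hab.le) hbd)
  exact (intervalIntegral.intervalIntegral_pos_of_pos_on (hgi.mono_set hsub) hpos hab).trans_le
    (intervalIntegral.integral_mono_interval hca hab.le hbd hg hgi)

lemma exists_nat_div_le_le_succ_div {N : ℕ} (hN : 0 < N) {x : ℝ} (hx : x ∈ Icc (0 : ℝ) 1) :
    ∃ K < N, (K : ℝ) / N ≤ x ∧ x ≤ ((K : ℝ) + 1) / N := by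
  have hN' : (0 : ℝ) < N := Nat.cast_pos.2 hN
  rcases hx.2.lt_or_eq with hx1 | rfl
  · refine ⟨⌊N * x⌋₊, ?_, ?_, ?_⟩
    · exact (Nat.floor_lt (mul_nonneg hN'.le hx.1)).2 (by simpa using mul_lt_mul_of_pos_left hx1 hN')
    · rw [div_le_iff₀ hN', mul_comm x]
      exact Nat.floor_le (mul_nonneg hN'.le hx.1)
    · rw [le_div_iff₀ hN', mul_comm x]
      exact (Nat.lt_floor_add_one _).le
  · refine ⟨N - 1, by omega, ?_, ?_⟩
    · rw [div_le_one hN']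
      exact_mod_cast Nat.sub_le N 1
    · rw [Nat.cast_sub (by omega), Nat.cast_one, sub_add_cancel, div_self hN'.ne']

lemma StrictMonoOn.comp_nat_div {f : ℝ → ℝ} (hf : StrictMonoOn f (Icc 0 1)) (N : ℕ) :
    StrictMonoOn (fun i : ℕ => f (i / N)) (Iic N) := by
  have hmem : ∀ i ∈ Iic N, (i : ℝ) / N ∈ Icc (0 : ℝ) 1 := fun i hi =>
    ⟨by positivity, div_le_one_of_le₀ (Nat.cast_le.2 hi) (Nat.cast_nonneg N)⟩
  intro i hi j hj hij
  have hN : (0 : ℝ) < N := Nat.cast_pos.2 ((Nat.zero_le i).trans_lt (hij.trans_le hj))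
  exact hf (hmem i hi) (hmem j hj) (div_lt_div_of_pos_right (Nat.cast_lt.2 hij) hN)

lemma pi_mul_sub_div_mem_Ioo {a b s : ℝ} (hs : s ∈ Ioo a b) :
    Real.pi * (s - a) / (2 * (b - a)) ∈ Ioo 0 (Real.pi / 2) := by
  have hba : 0 < b - a := by linarith [hs.1, hs.2]
  constructor
  · exact div_pos (mul_pos Real.pi_pos (by linarith [hs.1])) (by positivity)
  · rw [div_lt_iff₀ (by positivity)]
    nlinarith [Real.pi_pos, hs.2]

lemma sin_sq_pi_mul_sub_div_pos {a b s : ℝ} (hs : s ∈ Ioo a b) :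
    0 < Real.sin (Real.pi * (s - a) / (2 * (b - a))) ^ 2 := by
  have h := pi_mul_sub_div_mem_Ioo hs
  exact pow_pos (Real.sin_pos_of_pos_of_lt_pi h.1 (h.2.trans (half_lt_self Real.pi_pos))) 2

lemma cos_sq_pi_mul_sub_div_pos {a b s : ℝ} (hs : s ∈ Ioo a b) :
    0 < Real.cos (Real.pi * (s - a) / (2 * (b - a))) ^ 2 := by
  have h := pi_mul_sub_div_mem_Ioo hs
  exact pow_pos (Real.cos_pos_of_mem_Ioo ⟨by linarith [h.1, Real.pi_pos], h.2⟩) 2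

section qA

variable {n i : ℕ} {x : ℝ}

lemma qA_nonneg : 0 ≤ qA n i x := by
  unfold qA; split_ifs <;> positivity

lemma qA_le_one : qA n i x ≤ 1 := by
  unfold qA
  split_ifs <;> first | exact Real.sin_sq_le_one _ | exact Real.cos_sq_le_one _ | exact zero_le_one

lemma qA_of_odd (hi : i % 2 = 1) (h₁ : ((i : ℝ) - 1) / (2 * n) ≤ x)
    (h₂ : x ≤ ((i : ℝ) + 1) / (2 * n)) : qA n i x = Real.sin (n * Real.pi * x) ^ 2 := by
  rw [qA, if_pos hi, if_pos ⟨h₁, h₂⟩]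

lemma qA_of_even (hi : i % 2 = 0) (hx : x ∈ Icc (0 : ℝ) 1) (h₁ : ((i : ℝ) - 1) / (2 * n) ≤ x)
    (h₂ : x ≤ ((i : ℝ) + 1) / (2 * n)) : qA n i x = Real.cos (n * Real.pi * x) ^ 2 := by
  rw [qA, if_neg (by omega), if_pos ⟨max_le hx.1 h₁, le_min hx.2 h₂⟩]

lemma qA_add_qA_succ {K : ℕ} (hx : x ∈ Icc (0 : ℝ) 1) (h₁ : (K : ℝ) / (2 * n) ≤ x)
    (h₂ : x ≤ ((K : ℝ) + 1) / (2 * n)) : qA n K x + qA n (K + 1) x = 1 := by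
  have hK₁ : ((K : ℝ) - 1) / (2 * n) ≤ x := le_trans (by gcongr; linarith) h₁
  have hK₂ : x ≤ ((K : ℝ) + 1 + 1) / (2 * n) := h₂.trans (by gcongr; linarith)
  have hS₁ : (((K + 1 : ℕ) : ℝ) - 1) / (2 * n) ≤ x := by push_cast; simpa using h₁
  have hS₂ : x ≤ (((K + 1 : ℕ) : ℝ) + 1) / (2 * n) := by push_cast; exact hK₂
  rcases Nat.mod_two_eq_zero_or_one K with hK | hK
  · rw [qA_of_even hK hx hK₁ h₂, qA_of_odd (by omega) hS₁ hS₂, add_comm, Real.sin_sq_add_cos_sq]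
  · rw [qA_of_odd hK hK₁ h₂, qA_of_even (by omega) hx hS₁ hS₂, Real.sin_sq_add_cos_sq]

lemma exists_qA_pos (hn : 1 ≤ n) (hx : x ∈ Icc (0 : ℝ) 1) : ∃ i ≤ 2 * n, 0 < qA n i x := by
  obtain ⟨K, hK, h₁, h₂⟩ := exists_nat_div_le_le_succ_div (N := 2 * n) (by omega) hx
  push_cast at h₁ h₂
  have hsum := qA_add_qA_succ hx h₁ h₂
  by_contra! h
  linarith [h K (by omega), h (K + 1) (by omega)]

end qA

section qB

variable {n : ℕ} {y : ℕ → ℝ} {i : ℕ} {t : ℝ}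

lemma qB_nonneg : 0 ≤ qB n y i t := by
  unfold qB; split_ifs <;> positivity

lemma qB_le_one : qB n y i t ≤ 1 := by
  unfold qB
  split_ifs <;> first | exact Real.sin_sq_le_one _ | exact Real.cos_sq_le_one _ | exact zero_le_one

lemma measurable_qB : Measurable (qB n y i) := by
  unfold qB
  split_ifs
  · exact Measurable.ite measurableSet_Icc (by fun_prop) measurable_const
  · exact Measurable.ite measurableSet_Icc (by fun_prop) measurable_const
  · exact Measurable.ite measurableSet_Icc (by fun_prop)
      (Measurable.ite measurableSet_Ioc (by fun_prop) measurable_const)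

lemma qB_zero_of_mem_Icc (ht : t ∈ Icc (y 0) (y 1)) :
    qB n y 0 t = Real.cos (Real.pi * (t - y 0) / (2 * (y 1 - y 0))) ^ 2 := by
  rw [qB, if_pos rfl, if_pos ⟨ht.1, ht.2⟩]

lemma qB_of_mem_Icc (hi : i ≠ 0) (ht : t ∈ Icc (y (i - 1)) (y i)) :
    qB n y i t = Real.sin (Real.pi * (t - y (i - 1)) / (2 * (y i - y (i - 1)))) ^ 2 := by
  rw [qB, if_neg hi]
  by_cases hin : i = 2 * n
  · subst hin; rw [if_pos rfl, if_pos ⟨ht.1, ht.2⟩]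
  · rw [if_neg hin, if_pos ⟨ht.1, ht.2⟩]

lemma exists_Ioo_qB_pos (hn : 1 ≤ n) (hy : StrictMonoOn y (Iic (2 * n))) (hi : i ≤ 2 * n) :
    ∃ a b, y 0 ≤ a ∧ a < b ∧ b ≤ y (2 * n) ∧ ∀ t ∈ Ioo a b, 0 < qB n y i t := by
  have hle : ∀ j k, j ≤ k → k ≤ 2 * n → y j ≤ y k := fun j k hjk hk =>
    hy.monotoneOn (mem_Iic.2 (hjk.trans hk)) (mem_Iic.2 hk) hjk
  rcases eq_or_ne i 0 with rfl | hi₀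
  · refine ⟨y 0, y 1, le_rfl, hy (mem_Iic.2 (by omega)) (mem_Iic.2 (by omega)) one_pos,
      hle 1 _ (by omega) le_rfl, fun t ht => ?_⟩
    rw [qB_zero_of_mem_Icc (Ioo_subset_Icc_self ht)]
    exact cos_sq_pi_mul_sub_div_pos ht
  · refine ⟨y (i - 1), y i, hle 0 _ (by omega) (by omega),
      hy (mem_Iic.2 (by omega)) (mem_Iic.2 hi) (by omega), hle i _ hi le_rfl, fun t ht => ?_⟩
    rw [qB_of_mem_Icc hi₀ (Ioo_subset_Icc_self ht)]
    exact sin_sq_pi_mul_sub_div_pos ht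

end qB

section mufun

variable {n : ℕ} {y : ℕ → ℝ} {x : ℝ}

lemma qA_mul_qB_le_mufun {i : ℕ} (hi : i ≤ 2 * n) (t : ℝ) :
    qA n i x * qB n y i t ≤ mufun n y x t :=
  Finset.le_sup' (fun j => qA n j x * qB n y j t) (Finset.mem_range_succ_iff.2 hi)

lemma mufun_nonneg (t : ℝ) : 0 ≤ mufun n y x t :=
  (mul_nonneg qA_nonneg qB_nonneg).trans (qA_mul_qB_le_mufun (Nat.zero_le _) t)

lemma mufun_le_one (t : ℝ) : mufun n y x t ≤ 1 :=
  Finset.sup'_le _ _ fun _ _ => mul_le_one₀ qA_le_one qB_nonneg qB_le_one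

lemma measurable_mufun : Measurable (mufun n y x) := by
  have h : mufun n y x = (Finset.range (2 * n + 1)).sup' Finset.nonempty_range_add_one
      (fun i t => qA n i x * qB n y i t) := by
    funext t; rw [Finset.sup'_apply]; rfl
  rw [h]
  exact Finset.measurable_sup' _ fun i _ => measurable_const.mul measurable_qB

lemma intervalIntegrable_mufun (a b : ℝ) : IntervalIntegrable (mufun n y x) volume a b := by
  refine intervalIntegrable_const (c := (1 : ℝ)).mono_fun
    measurable_mufun.aestronglyMeasurable (Filter.Eventually.of_forall fun t => ?_)
  show ‖mufun n y x t‖ ≤ ‖(1 : ℝ)‖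
  rw [Real.norm_of_nonneg (mufun_nonneg t), norm_one]
  exact mufun_le_one t

end mufun

theorem stmt_17_general (f : ℝ → ℝ)
    (hmono : StrictMonoOn f (Set.Icc (0 : ℝ) 1))
    (n : ℕ) (hn : 1 ≤ n) :
    ∀ x ∈ Set.Icc (0 : ℝ) 1,
      0 < ∫ t in (f 0)..(f 1), mufun n (fun i => f ((i : ℝ) / (2 * (n : ℝ)))) x t := by
  intro x hx
  set y : ℕ → ℝ := fun i => f ((i : ℝ) / (2 * (n : ℝ)))
  have hy : StrictMonoOn y (Iic (2 * n)) := by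
    simpa only [Nat.cast_mul, Nat.cast_ofNat] using hmono.comp_nat_div (2 * n)
  have hy₀ : y 0 = f 0 := by simp [y]
  have hy₁ : y (2 * n) = f 1 := by
    simp only [y, Nat.cast_mul, Nat.cast_ofNat]
    rw [div_self (by positivity)]
  obtain ⟨i, hi, hA⟩ := exists_qA_pos hn hx
  obtain ⟨a, b, hca, hab, hbd, hB⟩ := exists_Ioo_qB_pos hn hy hi
  rw [← hy₀, ← hy₁]
  exact intervalIntegral_pos_of_pos_on_Ioo_subset (ae_of_all _ mufun_nonneg)
    (intervalIntegrable_mufun _ _) hca hab hbd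
    fun t ht => (mul_pos hA (hB t ht)).trans_le (qA_mul_qB_le_mufun hi t)

/-- For continuous strictly increasing `f` on `[0, 1]` with `c = f 0`,
`d = f 1`, `y i = f (i/(2n))` and `n ≥ 1`, the marginal `∫_c^d μ_n(x, t) dt` of the joint
function `μ_n` from the quantum construction is positive for every `x ∈ [0, 1]`. -/
theorem stmt_17 (f : ℝ → ℝ)
    (hf : ContinuousOn f (Set.Icc (0 : ℝ) 1))
    (hmono : StrictMonoOn f (Set.Icc (0 : ℝ) 1))
    (n : ℕ) (hn : 1 ≤ n) :
    ∀ x ∈ Set.Icc (0 : ℝ) 1,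
      0 < ∫ t in (f 0)..(f 1), mufun n (fun i => f ((i : ℝ) / (2 * (n : ℝ)))) x t :=
  stmt_17_general f hmono n hn
end
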